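/- arXiv:1107.3009 — 2 statements merged into one kernel-verified Lean document; each statement's English description precedes it below -/
import Mathlib

section
/- Let R be a commutative ring and n ≥ 2 a natural number. For any two ideals 𝔞 and 𝔟 of R one has E(n,R,𝔞) ⊔ E(n,R,𝔟) = E(n,R,𝔞+𝔟); equivalently, the product of the two relative elementary subgroups E(n,R,𝔞)·E(n,R,𝔟) equals E(n,R,𝔞+𝔟). (Type A_{n−1} instance of the paper's Lemma that E(Φ,R,𝔞)E(Φ,R,𝔟) = E(Φ,R,𝔞+𝔟), which holds even for rank 1.) -/
/-!
A transvection with parameter `u + v` is the product of those with parameters `u` and `v`,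
so every generator of `E(n,R,𝔞+𝔟)` splits into a generator of `E(n,R,𝔞)` times one of
`E(n,R,𝔟)`. Both relative subgroups lie in `E(n,R)`, which normalizes each of them, so their
join is their set product.
-/

open Matrix Pointwise

/-- `SL n R` : the special linear group of degree `n` over `R`,
the simply connected Chevalley group of type `A_{n-1}`. -/
abbrev SL (n : ℕ) (R : Type*) [CommRing R] := Matrix.SpecialLinearGroup (Fin n) R

/-- The elementary transvection `e_{ij}(a) = 1 + a·E_{ij}` as an element of `SL n R`. -/
def elemTransv {n : ℕ} {R : Type*} [CommRing R] (i j : Fin n) (h : i ≠ j) (a : R) :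
    SL n R :=
  ⟨Matrix.transvection i j a, Matrix.det_transvection_of_ne i j h a⟩

/-- The set of elementary transvections with parameters in `S`. -/
def transvSet (n : ℕ) {R : Type*} [CommRing R] (S : Set R) : Set (SL n R) :=
  { x | ∃ i j : Fin n, ∃ h : i ≠ j, ∃ a ∈ S, x = elemTransv i j h a }

/-- `E(n,S)` : the subgroup generated by elementary transvections with parameters in `S`. -/
def Esub (n : ℕ) {R : Type*} [CommRing R] (S : Set R) : Subgroup (SL n R) :=
  Subgroup.closure (transvSet n S)

/-- `E(n,T,S)` : the normal closure of `E(n,S)` in `E(n,T)`, i.e. the subgroup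
generated by the conjugates of elementary generators of level `S` by elements
of `E(n,T)`. -/
def relESet (n : ℕ) {R : Type*} [CommRing R] (T S : Set R) : Subgroup (SL n R) :=
  Subgroup.closure
    { x | ∃ g ∈ Esub n T, ∃ y ∈ transvSet n S, x = g * y * g⁻¹ }

/-- `E(n,R,I)` : the relative elementary subgroup, the normal closure of
`E(n,I)` in the absolute elementary subgroup `E(n,R)`. -/
def relE (n : ℕ) {R : Type*} [CommRing R] (I : Ideal R) : Subgroup (SL n R) :=
  relESet n (Set.univ : Set R) (I : Set R)

/-- The reduction homomorphism `SL(n,R) → SL(n,R/I)`. -/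
def redMap (n : ℕ) {R : Type*} [CommRing R] (I : Ideal R) : SL n R →* SL n (R ⧸ I) :=
  Matrix.SpecialLinearGroup.map (Ideal.Quotient.mk I)

/-- `SL(n,R,I)` : the principal congruence subgroup of level `I`. -/
def SLcong (n : ℕ) {R : Type*} [CommRing R] (I : Ideal R) : Subgroup (SL n R) :=
  (redMap n I).ker

/-- `C(n,R,I)` : the full congruence subgroup of level `I`. -/
def Ccong (n : ℕ) {R : Type*} [CommRing R] (I : Ideal R) : Subgroup (SL n R) :=
  Subgroup.comap (redMap n I) (Subgroup.center (SL n (R ⧸ I)))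

section RelativeElementary

variable {n : ℕ} {R : Type*} [CommRing R]

lemma elemTransv_add (i j : Fin n) (h : i ≠ j) (x y : R) :
    elemTransv i j h (x + y) = elemTransv i j h x * elemTransv i j h y :=
  Subtype.ext (Matrix.transvection_mul_transvection_same i j h x y).symm

lemma transvSet_mono {S S' : Set R} (h : S ⊆ S') : transvSet n S ⊆ transvSet n S' := by
  rintro _ ⟨i, j, hij, c, hc, rfl⟩
  exact ⟨i, j, hij, c, h hc, rfl⟩

lemma relESet_mono_right (T : Set R) {S S' : Set R} (h : S ⊆ S') :
    relESet n T S ≤ relESet n T S' := by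
  apply Subgroup.closure_mono
  rintro _ ⟨g, hg, y, hy, rfl⟩
  exact ⟨g, hg, y, transvSet_mono h hy, rfl⟩

lemma relESet_le_Esub {T S : Set R} (h : S ⊆ T) : relESet n T S ≤ Esub n T := by
  rw [relESet, Subgroup.closure_le]
  rintro _ ⟨g, hg, y, hy, rfl⟩
  have hy' : y ∈ Esub n T := Subgroup.subset_closure (transvSet_mono h hy)
  exact mul_mem (mul_mem hg hy') (inv_mem hg)

lemma Esub_le_normalizer_relESet (T S : Set R) :
    Esub n T ≤ Subgroup.normalizer (relESet n T S : Set (SL n R)) := by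
  rw [relESet, Subgroup.le_normalizer_closure_iff]
  rintro h hh _ ⟨g, hg, y, hy, rfl⟩
  exact Subgroup.subset_closure ⟨h * g, mul_mem hh hg, y, hy, by group⟩

lemma relESet_add_le_sup (T S S' : Set R) :
    relESet n T (S + S') ≤ relESet n T S ⊔ relESet n T S' := by
  rw [relESet, Subgroup.closure_le]
  rintro _ ⟨g, hg, _, ⟨i, j, hij, _, ⟨u, hu, v, hv, rfl⟩, rfl⟩, rfl⟩
  have hsplit : g * elemTransv i j hij (u + v) * g⁻¹ =
      (g * elemTransv i j hij u * g⁻¹) * (g * elemTransv i j hij v * g⁻¹) := by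
    rw [elemTransv_add]; group
  rw [hsplit]
  exact mul_mem
    (Subgroup.mem_sup_left (Subgroup.subset_closure ⟨g, hg, _, ⟨i, j, hij, u, hu, rfl⟩, rfl⟩))
    (Subgroup.mem_sup_right (Subgroup.subset_closure ⟨g, hg, _, ⟨i, j, hij, v, hv, rfl⟩, rfl⟩))

lemma relE_sup_relE (I J : Ideal R) : relE n I ⊔ relE n J = relE n (I + J) := by
  apply le_antisymm
  · exact sup_le (relESet_mono_right _ (SetLike.coe_subset_coe.2 le_sup_left))
      (relESet_mono_right _ (SetLike.coe_subset_coe.2 le_sup_right))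
  · have hcoe : ((I + J : Ideal R) : Set R) = I + J := Submodule.coe_sup I J
    rw [relE, hcoe]
    exact relESet_add_le_sup _ _ _

lemma relE_le_normalizer_relE (I J : Ideal R) :
    relE n J ≤ Subgroup.normalizer (relE n I : Set (SL n R)) :=
  (relESet_le_Esub (Set.subset_univ _)).trans (Esub_le_normalizer_relESet _ _)

end RelativeElementary

theorem relE_sup_relE_eq_relE_add_general
    {R : Type*} [CommRing R] (n : ℕ) (a b : Ideal R) :
    relE n a ⊔ relE n b = relE n (a + b) ∧
      (relE n a : Set (SL n R)) * (relE n b : Set (SL n R)) =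
        (relE n (a + b) : Set (SL n R)) := by
  refine ⟨relE_sup_relE a b, ?_⟩
  rw [← relE_sup_relE]
  exact (Subgroup.coe_mul_of_right_le_normalizer_left _ _ (relE_le_normalizer_relE a b)).symm

/-- For a commutative ring `R`, `n ≥ 2` and ideals `𝔞, 𝔟 ⊴ R`,
`E(n,R,𝔞) ⊔ E(n,R,𝔟) = E(n,R,𝔞+𝔟)`; equivalently, the set-product
`E(n,R,𝔞)·E(n,R,𝔟)` equals `E(n,R,𝔞+𝔟)`. -/
theorem relE_sup_relE_eq_relE_add
    {R : Type*} [CommRing R] (n : ℕ) (hn : 2 ≤ n) (a b : Ideal R) :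
    relE n a ⊔ relE n b = relE n (a + b) ∧
      (relE n a : Set (SL n R)) * (relE n b : Set (SL n R)) =
        (relE n (a + b) : Set (SL n R)) :=
  relE_sup_relE_eq_relE_add_general n a b
end

section
/- Let R be a commutative ring, n ≥ 3 a natural number, and let 𝔞 be an ideal of R. Then E(n,R,𝔞²) ≤ E(n,𝔞): the relative elementary subgroup of level 𝔞² is contained in the subgroup generated by elementary transvections with parameters in 𝔞. (Type A_{n−1} instance of the Tits–Stein lemma: for Φ ≠ C_l, E(Φ,𝔞) ≥ E(Φ,R,𝔞²).) -/
open Matrix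

/-! Let `F(I)` be the subgroup generated by the `z_{pq}(y, c) = e_{qp}(c) e_{pq}(y) e_{qp}(-c)`
with `y ∈ I`. It contains `E(n, I)` and, for `n ≥ 3`, is normalized by every elementary
transvection (a case analysis on the relative position of the indices, using the Steinberg
relations), so it contains `E(n, R, I)`. For `I = 𝔞²` and `s, t ∈ 𝔞`, a third index `h`
writes `z_{pq}(st, c)` as the commutator of `e_{qh}(cs) e_{ph}(s)` and `e_{hp}(-tc) e_{hq}(t)`,
whose factors lie in `E(n, 𝔞)`; since `z_{pq}` is additive in `y`, `F(𝔞²) ≤ E(n, 𝔞)`. -/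

open scoped commutatorElement

section Conjugation

variable {G : Type*} [Group G]

theorem conj_mem_of_mem_closure {S : Set G} {H : Subgroup G} {g x : G}
    (hS : ∀ s ∈ S, g * s * g⁻¹ ∈ H) (hx : x ∈ Subgroup.closure S) : g * x * g⁻¹ ∈ H :=
  (Subgroup.closure_le (H.comap (MulAut.conj g).toMonoidHom)).mpr hS hx

theorem Commute.conj_conj_comm {g u : G} (h : Commute g u) (x : G) :
    g * (u * x * u⁻¹) * g⁻¹ = u * (g * x * g⁻¹) * u⁻¹ := by
  calc _ = (g * u) * x * (g * u)⁻¹ := by group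
    _ = (u * g) * x * (u * g)⁻¹ := by rw [h.eq]
    _ = _ := by group

theorem conj_conj_eq_conj_of_commute {g u a b : G} (hb : Commute g b) (ha : g * a * g⁻¹ = u * a) :
    g * (a * b * a⁻¹) * g⁻¹ = u * (a * b * a⁻¹) * u⁻¹ := by
  calc _ = (g * a * g⁻¹) * (g * b * g⁻¹) * (g * a * g⁻¹)⁻¹ := by group
    _ = (u * a) * b * (u * a)⁻¹ := by rw [ha, hb.mul_inv_cancel]
    _ = _ := by group

end Conjugation

section

variable {R : Type*} [CommRing R] {n : ℕ}

section Relations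

variable {i j k l : Fin n}

theorem coe_elemTransv (hij : i ≠ j) (a : R) :
    (elemTransv i j hij a : Matrix (Fin n) (Fin n) R) = transvection i j a :=
  rfl

theorem elemTransv_add_s7 (hij : i ≠ j) (a b : R) :
    elemTransv i j hij (a + b) = elemTransv i j hij a * elemTransv i j hij b :=
  Subtype.ext (transvection_mul_transvection_same i j hij a b).symm

theorem elemTransv_zero (hij : i ≠ j) : elemTransv i j hij (0 : R) = 1 :=
  Subtype.ext (by simp [elemTransv, transvection])

theorem elemTransv_inv (hij : i ≠ j) (a : R) :
    (elemTransv i j hij a)⁻¹ = elemTransv i j hij (-a) :=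
  inv_eq_of_mul_eq_one_right (by rw [← elemTransv_add_s7, add_neg_cancel, elemTransv_zero])

theorem elemTransv_commute (hij : i ≠ j) (hkl : k ≠ l) (hjk : j ≠ k) (hli : l ≠ i) (a b : R) :
    Commute (elemTransv i j hij a) (elemTransv k l hkl b) := by
  rw [commute_iff_eq]
  apply Subtype.ext
  simp only [Matrix.SpecialLinearGroup.coe_mul, coe_elemTransv]
  simp only [transvection, Matrix.mul_add, Matrix.add_mul, mul_one, one_mul, ne_eq, hjk, hli,
    not_false_eq_true, single_mul_single_of_ne, add_zero]
  abel

theorem elemTransv_mul_elemTransv (hij : i ≠ j) (hjk : j ≠ k) (hik : i ≠ k) (a b : R) :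
    elemTransv i j hij a * elemTransv j k hjk b
      = elemTransv i k hik (a * b) * elemTransv j k hjk b * elemTransv i j hij a := by
  apply Subtype.ext
  simp only [Matrix.SpecialLinearGroup.coe_mul, coe_elemTransv]
  simp only [transvection, Matrix.mul_add, Matrix.add_mul, mul_one, one_mul,
    single_mul_single_same, ne_eq, hjk.symm, hik.symm, not_false_eq_true,
    single_mul_single_of_ne, add_zero]
  abel

theorem elemTransv_conj_of_tgt_eq_src (hij : i ≠ j) (hjk : j ≠ k) (hik : i ≠ k) (a b : R) :
    elemTransv i j hij a * elemTransv j k hjk b * (elemTransv i j hij a)⁻¹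
      = elemTransv i k hik (a * b) * elemTransv j k hjk b := by
  rw [elemTransv_mul_elemTransv hij hjk hik, mul_inv_cancel_right]

theorem elemTransv_conj_of_src_eq_tgt (hij : i ≠ j) (hjk : j ≠ k) (hik : i ≠ k) (a b : R) :
    elemTransv j k hjk b * elemTransv i j hij a * (elemTransv j k hjk b)⁻¹
      = elemTransv i k hik (-(a * b)) * elemTransv i j hij a := by
  rw [mul_inv_eq_iff_eq_mul, mul_assoc, elemTransv_mul_elemTransv hij hjk hik, ← mul_assoc,
    ← mul_assoc, ← elemTransv_add_s7, neg_add_cancel, elemTransv_zero, one_mul]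

theorem commutatorElement_elemTransv (hij : i ≠ j) (hjk : j ≠ k) (hik : i ≠ k) (a b : R) :
    ⁅elemTransv i j hij a, elemTransv j k hjk b⁆ = elemTransv i k hik (a * b) := by
  rw [commutatorElement_def, elemTransv_conj_of_tgt_eq_src hij hjk hik, mul_inv_cancel_right]

end Relations

def zTransv (p q : Fin n) (hpq : p ≠ q) (y c : R) : SL n R :=
  elemTransv q p hpq.symm c * elemTransv p q hpq y * (elemTransv q p hpq.symm c)⁻¹

def zSubgroup (n : ℕ) (I : Ideal R) : Subgroup (SL n R) :=
  Subgroup.closure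
    { x | ∃ (p q : Fin n) (hpq : p ≠ q), ∃ y ∈ I, ∃ c : R, x = zTransv p q hpq y c }

variable {p q : Fin n} {I : Ideal R}

theorem zTransv_mem_zSubgroup (hpq : p ≠ q) {y : R} (hy : y ∈ I) (c : R) :
    zTransv p q hpq y c ∈ zSubgroup n I :=
  Subgroup.subset_closure ⟨p, q, hpq, y, hy, c, rfl⟩

theorem elemTransv_mem_zSubgroup (hpq : p ≠ q) {y : R} (hy : y ∈ I) :
    elemTransv p q hpq y ∈ zSubgroup n I := by
  simpa [zTransv, elemTransv_zero] using zTransv_mem_zSubgroup hpq hy 0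

theorem Esub_le_zSubgroup : Esub n (I : Set R) ≤ zSubgroup n I :=
  (Subgroup.closure_le _).mpr fun _ ⟨_, _, hij, _, hx, hg⟩ => hg ▸ elemTransv_mem_zSubgroup hij hx

theorem zTransv_add (hpq : p ≠ q) (y₁ y₂ c : R) :
    zTransv p q hpq (y₁ + y₂) c = zTransv p q hpq y₁ c * zTransv p q hpq y₂ c := by
  simp only [zTransv, elemTransv_add_s7, conj_mul]

theorem elemTransv_conj_zTransv (hpq : p ≠ q) (y r c : R) :
    elemTransv q p hpq.symm r * zTransv p q hpq y c * (elemTransv q p hpq.symm r)⁻¹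
      = zTransv p q hpq y (r + c) := by
  simp only [zTransv, elemTransv_add_s7, _root_.mul_inv_rev, mul_assoc]

theorem elemTransv_mem_Esub {S : Set R} {i j : Fin n} (hij : i ≠ j) {x : R} (hx : x ∈ S) :
    elemTransv i j hij x ∈ Esub n S :=
  Subgroup.subset_closure ⟨i, j, hij, x, hx, rfl⟩

section ConjElemTransv

variable {i j k l : Fin n}

theorem elemTransv_conj_elemTransv_mem_Esub (hij : i ≠ j) (hkl : k ≠ l)
    (hkl_ji : ¬(k = j ∧ l = i)) (r : R) {x : R} (hx : x ∈ I) :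
    elemTransv k l hkl r * elemTransv i j hij x * (elemTransv k l hkl r)⁻¹
      ∈ Esub n (I : Set R) := by
  by_cases hkj : k = j
  · subst hkj
    rw [elemTransv_conj_of_src_eq_tgt hij hkl fun hil => hkl_ji ⟨rfl, hil.symm⟩]
    exact mul_mem (elemTransv_mem_Esub _ (neg_mem (I.mul_mem_right r hx)))
      (elemTransv_mem_Esub _ hx)
  by_cases hli : l = i
  · subst hli
    rw [elemTransv_conj_of_tgt_eq_src hkl hij hkj]
    exact mul_mem (elemTransv_mem_Esub _ (I.mul_mem_left r hx)) (elemTransv_mem_Esub _ hx)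
  rw [(elemTransv_commute hkl hij hli (Ne.symm hkj) r x).mul_inv_cancel]
  exact elemTransv_mem_Esub _ hx

theorem elemTransv_conj_elemTransv_mem_zSubgroup (hij : i ≠ j) (hkl : k ≠ l) (r : R) {x : R}
    (hx : x ∈ I) :
    elemTransv k l hkl r * elemTransv i j hij x * (elemTransv k l hkl r)⁻¹ ∈ zSubgroup n I := by
  by_cases hkl_ji : k = j ∧ l = i
  · obtain ⟨rfl, rfl⟩ := hkl_ji
    exact zTransv_mem_zSubgroup hij hx r
  · exact Esub_le_zSubgroup (elemTransv_conj_elemTransv_mem_Esub hij hkl hkl_ji r hx)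

theorem elemTransv_conj_mem_zSubgroup_of_mem_Esub (hkl : k ≠ l) (r : R) {g : SL n R}
    (hg : g ∈ Esub n (I : Set R)) :
    elemTransv k l hkl r * g * (elemTransv k l hkl r)⁻¹ ∈ zSubgroup n I :=
  conj_mem_of_mem_closure (by
    rintro _ ⟨_, _, hij, _, hx, rfl⟩
    exact elemTransv_conj_elemTransv_mem_zSubgroup hij hkl r hx) hg

end ConjElemTransv

section ConjZTransv

variable {k l h : Fin n}

theorem zTransv_mul_eq_commutatorElement (hpq : p ≠ q) (hph : p ≠ h) (hqh : q ≠ h)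
    (s t c : R) :
    zTransv p q hpq (s * t) c
      = ⁅elemTransv q h hqh (c * s) * elemTransv p h hph s,
          elemTransv h p hph.symm (-(t * c)) * elemTransv h q hqh.symm t⁆ := by
  rw [zTransv, ← commutatorElement_elemTransv hph hqh.symm hpq, conjugate_commutatorElement,
    elemTransv_conj_of_tgt_eq_src hpq.symm hph hqh,
    elemTransv_conj_of_src_eq_tgt hqh.symm hpq.symm hph.symm]

theorem commutatorElement_elemTransv_mem_zSubgroup (hpq : p ≠ q) (hph : p ≠ h) (hqh : q ≠ h)
    {α : R} (hα : α ∈ I) (γ δ : R) :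
    ⁅elemTransv p h hph α, elemTransv h p hph.symm γ * elemTransv h q hqh.symm δ⁆
      ∈ zSubgroup n I := by
  have hp : ⁅elemTransv p h hph α, elemTransv h p hph.symm γ⁆
      = elemTransv p h hph α * zTransv p h hph (-α) γ := by
    rw [commutatorElement_def, zTransv, ← elemTransv_inv]
    group
  have hq : elemTransv h p hph.symm γ * ⁅elemTransv p h hph α, elemTransv h q hqh.symm δ⁆
        * (elemTransv h p hph.symm γ)⁻¹
      = elemTransv h q hqh.symm (γ * (α * δ)) * elemTransv p q hpq (α * δ) := by
    rw [commutatorElement_elemTransv hph hqh.symm hpq,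
      elemTransv_conj_of_tgt_eq_src hph.symm hpq hqh.symm]
  have hαδ : α * δ ∈ I := I.mul_mem_right δ hα
  rw [commutatorElement_mul_right_eq_mul_conj, mul_assoc _ (elemTransv h p hph.symm γ),
    mul_assoc, hp, hq]
  exact mul_mem (mul_mem (elemTransv_mem_zSubgroup hph hα) (zTransv_mem_zSubgroup hph
    (neg_mem hα) γ)) (mul_mem (elemTransv_mem_zSubgroup hqh.symm (I.mul_mem_left γ hαδ))
    (elemTransv_mem_zSubgroup hpq hαδ))

theorem commutatorElement_column_row_mem_zSubgroup (hpq : p ≠ q) (hph : p ≠ h) (hqh : q ≠ h)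
    {α β : R} (hα : α ∈ I) (hβ : β ∈ I) (γ δ : R) :
    ⁅elemTransv q h hqh β * elemTransv p h hph α,
        elemTransv h p hph.symm γ * elemTransv h q hqh.symm δ⁆ ∈ zSubgroup n I := by
  rw [commutatorElement_mul_left_eq_conj_mul]
  refine mul_mem (mul_mem (mul_mem (elemTransv_mem_zSubgroup hqh hβ)
    (commutatorElement_elemTransv_mem_zSubgroup hpq hph hqh hα γ δ))
    (inv_mem (elemTransv_mem_zSubgroup hqh hβ))) ?_
  rw [(elemTransv_commute hph.symm hqh.symm hph hqh γ δ).eq]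
  exact commutatorElement_elemTransv_mem_zSubgroup hpq.symm hqh hph hβ δ γ

/-- Through a third index `h`, `z_{pq}(y, c)` is a commutator of an element of column `h` with
one of row `h`, a shape that conjugation by `e_{pq}(r)` preserves. -/
theorem elemTransv_conj_zTransv_self_mem (hn : 3 ≤ n) (hpq : p ≠ q) (r : R) {y : R}
    (hy : y ∈ I) (c : R) :
    elemTransv p q hpq r * zTransv p q hpq y c * (elemTransv p q hpq r)⁻¹ ∈ zSubgroup n I := by
  obtain ⟨h, hhp, hhq⟩ := Fin.exists_ne_and_ne_of_two_lt p q hn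
  have hcol : elemTransv p q hpq r * (elemTransv q h hhq.symm (c * y) * elemTransv p h hhp.symm y)
        * (elemTransv p q hpq r)⁻¹
      = elemTransv q h hhq.symm (c * y) * elemTransv p h hhp.symm (r * (c * y) + y) := by
    rw [← conj_mul, elemTransv_conj_of_tgt_eq_src hpq hhq.symm hhp.symm,
      (elemTransv_commute hpq hhp.symm hpq.symm hhp r y).mul_inv_cancel,
      elemTransv_commute hhp.symm hhq.symm hhq hhp, mul_assoc, ← elemTransv_add_s7]
  have hrow : elemTransv p q hpq r * (elemTransv h p hhp (-(1 * c)) * elemTransv h q hhq 1)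
        * (elemTransv p q hpq r)⁻¹
      = elemTransv h p hhp (-(1 * c)) * elemTransv h q hhq (-(-(1 * c) * r) + 1) := by
    rw [← conj_mul, elemTransv_conj_of_src_eq_tgt hhp hpq hhq,
      (elemTransv_commute hpq hhq hhq.symm hpq.symm r 1).mul_inv_cancel,
      elemTransv_commute hhq hhp hhq.symm hhp.symm, mul_assoc, ← elemTransv_add_s7]
  rw [← mul_one y, zTransv_mul_eq_commutatorElement hpq hhp.symm hhq.symm,
    conjugate_commutatorElement, hcol, hrow]
  exact commutatorElement_column_row_mem_zSubgroup hpq hhp.symm hhq.symm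
    (add_mem (I.mul_mem_left _ (I.mul_mem_left c hy)) hy) (I.mul_mem_left c hy) _ _

theorem elemTransv_conj_zTransv_mem_of_ne (hpq : p ≠ q) (hkl : k ≠ l) (hlq : l ≠ q)
    (hkp : k ≠ p) (r : R) {y : R} (hy : y ∈ I) (c : R) :
    elemTransv k l hkl r * zTransv p q hpq y c * (elemTransv k l hkl r)⁻¹ ∈ zSubgroup n I := by
  by_cases hkl_qp : k = q ∧ l = p
  · obtain ⟨rfl, rfl⟩ := hkl_qp
    rw [elemTransv_conj_zTransv]
    exact zTransv_mem_zSubgroup hpq hy (r + c)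
  have hcomm := elemTransv_commute hkl hpq.symm hlq (Ne.symm hkp) r c
  have hswap : elemTransv k l hkl r * zTransv p q hpq y c * (elemTransv k l hkl r)⁻¹
      = elemTransv q p hpq.symm c
          * (elemTransv k l hkl r * elemTransv p q hpq y * (elemTransv k l hkl r)⁻¹)
          * (elemTransv q p hpq.symm c)⁻¹ := by
    rw [zTransv, hcomm.conj_conj_comm]
  rw [hswap]
  exact elemTransv_conj_mem_zSubgroup_of_mem_Esub hpq.symm c
    (elemTransv_conj_elemTransv_mem_Esub hpq hkl hkl_qp r hy)

theorem elemTransv_conj_zTransv_mem (hn : 3 ≤ n) (hpq : p ≠ q) (hkl : k ≠ l) (r : R) {y : R}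
    (hy : y ∈ I) (c : R) :
    elemTransv k l hkl r * zTransv p q hpq y c * (elemTransv k l hkl r)⁻¹ ∈ zSubgroup n I := by
  by_cases hlq : l = q <;> by_cases hkp : k = p
  · subst hlq hkp
    exact elemTransv_conj_zTransv_self_mem hn hpq r hy c
  · subst hlq
    rw [zTransv, conj_conj_eq_conj_of_commute (elemTransv_commute hkl hpq hpq.symm hkl.symm r y)
      (elemTransv_conj_of_tgt_eq_src hkl hpq.symm hkp r c), ← zTransv]
    exact elemTransv_conj_zTransv_mem_of_ne hpq hkp hpq hkp _ hy c
  · subst hkp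
    rw [zTransv, conj_conj_eq_conj_of_commute (elemTransv_commute hkl hpq hkl.symm hpq.symm r y)
      (elemTransv_conj_of_src_eq_tgt hpq.symm hkl (Ne.symm hlq) c r), ← zTransv]
    exact elemTransv_conj_zTransv_mem_of_ne hpq (Ne.symm hlq) hlq hpq.symm _ hy c
  · exact elemTransv_conj_zTransv_mem_of_ne hpq hkl hlq hkp r hy c

end ConjZTransv

theorem elemTransv_conj_mem_zSubgroup (hn : 3 ≤ n) {k l : Fin n} (hkl : k ≠ l) (r : R)
    {f : SL n R} (hf : f ∈ zSubgroup n I) :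
    elemTransv k l hkl r * f * (elemTransv k l hkl r)⁻¹ ∈ zSubgroup n I :=
  conj_mem_of_mem_closure (by
    rintro _ ⟨_, _, hpq, _, hy, c, rfl⟩
    exact elemTransv_conj_zTransv_mem hn hpq hkl r hy c) hf

theorem conj_mem_zSubgroup (hn : 3 ≤ n) {g f : SL n R} (hg : g ∈ Esub n (Set.univ : Set R))
    (hf : f ∈ zSubgroup n I) : g * f * g⁻¹ ∈ zSubgroup n I := by
  induction hg using Subgroup.closure_induction'' generalizing f with
  | mem _ hx =>
    obtain ⟨k, l, hkl, r, -, rfl⟩ := hx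
    exact elemTransv_conj_mem_zSubgroup hn hkl r hf
  | inv_mem _ hx =>
    obtain ⟨k, l, hkl, r, -, rfl⟩ := hx
    rw [elemTransv_inv]
    exact elemTransv_conj_mem_zSubgroup hn hkl (-r) hf
  | one => simpa using hf
  | mul x y _ _ hx hy =>
    rw [show x * y * f * (x * y)⁻¹ = x * (y * f * y⁻¹) * x⁻¹ by group]
    exact hx (hy hf)

theorem relE_le_zSubgroup (hn : 3 ≤ n) (I : Ideal R) : relE n I ≤ zSubgroup n I :=
  (Subgroup.closure_le _).mpr fun _ ⟨_, hg, _, hy, hx⟩ =>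
    hx ▸ conj_mem_zSubgroup hn hg (Esub_le_zSubgroup (Subgroup.subset_closure hy))

theorem zSubgroup_mul_le_Esub (hn : 3 ≤ n) (a b : Ideal R) :
    zSubgroup n (a * b) ≤ Esub n ((a : Set R) ∪ b) := by
  refine (Subgroup.closure_le _).mpr ?_
  rintro _ ⟨p, q, hpq, y, hy, c, rfl⟩
  induction hy using Submodule.mul_induction_on' with
  | mem_mul_mem s hs t ht =>
    obtain ⟨h, hhp, hhq⟩ := Fin.exists_ne_and_ne_of_two_lt p q hn
    rw [zTransv_mul_eq_commutatorElement hpq hhp.symm hhq.symm, commutatorElement_def]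
    refine mul_mem (mul_mem (mul_mem ?col ?row) (inv_mem ?col)) (inv_mem ?row)
    case col =>
      exact mul_mem (elemTransv_mem_Esub _ (Or.inl (a.mul_mem_left c hs)))
        (elemTransv_mem_Esub _ (Or.inl hs))
    case row =>
      exact mul_mem (elemTransv_mem_Esub _ (Or.inr (neg_mem (b.mul_mem_right c ht))))
        (elemTransv_mem_Esub _ (Or.inr ht))
  | add _ _ _ _ h₁ h₂ =>
    rw [zTransv_add]
    exact mul_mem h₁ h₂

end

/-- For a commutative ring `R`, `n ≥ 3` and an ideal `𝔞 ⊴ R`,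
`E(n,R,𝔞²) ≤ E(n,𝔞)`. -/
theorem relE_sq_le_Esub
    {R : Type*} [CommRing R] (n : ℕ) (hn : 3 ≤ n) (a : Ideal R) :
    relE n (a ^ 2) ≤ Esub n (a : Set R) :=
  calc relE n (a ^ 2) ≤ zSubgroup n (a * a) := pow_two a ▸ relE_le_zSubgroup hn _
    _ ≤ Esub n ((a : Set R) ∪ a) := zSubgroup_mul_le_Esub hn a a
    _ = Esub n a := by rw [Set.union_self]
end
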